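/- For any n \ge 1, \sum_{I \subseteq \{1,...,n\}, 0 < |I| < n} Z_I^{|I|-1}(Z - Z_I)^{n-|I|-1} = 2(n-1) Z^{n-2} as polynomials in z_1,...,z_n, where Z = z_1 + ... + z_n and Z_I = \sum_{i \in I} z_i. -/

import Mathlib

/-!
For a finite set `s` and weights `z`, write `Z_I = ∑_{i ∈ I} z i`. The polynomial
`A_s(X) = ∑_{∅ ≠ I ⊆ s} Z_I^{|I|-1} (X - Z_I)^{|s|-|I|}` equals `|s| X^{|s|-1}` (a form of
Hurwitz's generalisation of Abel's identity): its derivative is `∑_{a ∈ s} A_{s \ {a}}`, so by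
induction both sides differ by a constant, and at `X = 0` that constant is an `|s|`-th finite
difference of a polynomial of degree `|s| - 1`, hence zero. Differentiating and evaluating at
`X = Z_s` gives `∑ (|s| - |I|) Z_I^{|I|-1} (Z_s - Z_I)^{|s|-|I|-1} = |s|(|s|-1) Z_s^{|s|-2}`.
The unweighted summand is invariant under `I ↦ s \ I`, which turns the weight `|s| - |I|` into
`|I|`; adding the two versions gives `|s|` times the required sum.
-/

open Finset

namespace Finset

variable {ι M : Type*} [DecidableEq ι] [AddCommMonoid M]

theorem sum_powerset_filter_card_sub_smul (s : Finset ι) (p : Finset ι → Prop) [DecidablePred p]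
    (f : Finset ι → M) :
    ∑ I ∈ s.powerset with p I, (#s - #I) • f I
      = ∑ a ∈ s, ∑ I ∈ (s.erase a).powerset with p I, f I := by
  calc ∑ I ∈ s.powerset with p I, (#s - #I) • f I
      = ∑ I ∈ s.powerset with p I, ∑ _a ∈ s \ I, f I := by
        refine sum_congr rfl fun I hI ↦ ?_
        rw [sum_const, card_sdiff_of_subset (mem_powerset.1 (mem_filter.1 hI).1)]
    _ = ∑ a ∈ s, ∑ I ∈ (s.erase a).powerset with p I, f I := by
        refine sum_comm' fun I a ↦ ?_
        simp only [mem_filter, mem_powerset, mem_sdiff, subset_erase]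
        tauto

theorem sum_powerset_filter_sdiff (s : Finset ι) {p : Finset ι → Prop} [DecidablePred p]
    (hp : ∀ I ⊆ s, p (s \ I) ↔ p I) (f : Finset ι → M) :
    ∑ I ∈ s.powerset with p I, f (s \ I) = ∑ I ∈ s.powerset with p I, f I := by
  refine sum_nbij' (s \ ·) (s \ ·) ?_ ?_ ?_ ?_ fun _ _ ↦ rfl <;>
    simp +contextual [hp]

end Finset

namespace Polynomial

variable {R ι : Type*} [CommRing R]

theorem eq_of_derivative_eq_of_eval_eq [IsAddTorsionFree R] {p q : R[X]} (a : R)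
    (hd : derivative p = derivative q) (he : p.eval a = q.eval a) : p = q := by
  have hC := eq_C_of_derivative_eq_zero (p := p - q) (by rw [derivative_sub, hd, sub_self])
  have h0 : (p - q).coeff 0 = 0 := by simpa [he] using (congrArg (eval a) hC).symm
  rw [h0, map_zero, sub_eq_zero] at hC
  exact hC

theorem sum_powerset_neg_one_pow_card_sdiff_mul_X_add_C_pow_eq_zero [IsAddTorsionFree R]
    [DecidableEq ι] (z : ι → R) (s : Finset ι) {m : ℕ} (hm : m < #s) :
    ∑ I ∈ s.powerset, (-1) ^ (#s - #I) * (X + C (∑ i ∈ I, z i)) ^ m = 0 := by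
  induction s using Finset.induction_on generalizing m with
  | empty => simp at hm
  | insert a t ha ih =>
    rw [card_insert_of_notMem ha] at hm ⊢
    set G : R[X] := ∑ I ∈ t.powerset, (-1) ^ (#t - #I) * (X + C (∑ i ∈ I, z i)) ^ m
    have hG : derivative G = 0 := by
      rcases m with _ | m
      · simp [G, derivative_pow]
      · have hderiv : derivative G = C ((m + 1 : ℕ) : R) *
            ∑ I ∈ t.powerset, (-1) ^ (#t - #I) * (X + C (∑ i ∈ I, z i)) ^ m := by
          simp only [G, derivative_sum, derivative_mul, derivative_pow, derivative_add,
            derivative_X, derivative_C, derivative_neg, derivative_one, neg_zero, mul_zero,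
            zero_mul, zero_add, add_zero, mul_one, Nat.add_sub_cancel]
          rw [mul_sum]
          exact sum_congr rfl fun I _ ↦ by ring
        rw [hderiv, ih (by omega), mul_zero]
    have hbase : ∑ I ∈ t.powerset, (-1) ^ (#t + 1 - #I) * (X + C (∑ i ∈ I, z i)) ^ m = -G := by
      rw [← sum_neg_distrib]
      refine sum_congr rfl fun I hI ↦ ?_
      rw [Nat.sub_add_comm (card_le_card (mem_powerset.1 hI)), pow_succ]
      ring
    have hshift : ∑ I ∈ t.powerset,
        (-1) ^ (#t + 1 - #(insert a I)) * (X + C (∑ i ∈ insert a I, z i)) ^ m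
          = G.comp (X + C (z a)) := by
      simp only [G, sum_comp, mul_comp, pow_comp, add_comp, X_comp, C_comp, neg_comp, one_comp]
      refine sum_congr rfl fun I hI ↦ ?_
      have haI : a ∉ I := fun h ↦ ha (mem_powerset.1 hI h)
      rw [card_insert_of_notMem haI, sum_insert haI, C_add, Nat.add_sub_add_right, add_assoc]
    rw [sum_powerset_insert ha, hbase, hshift, eq_C_of_derivative_eq_zero hG, C_comp,
      neg_add_cancel]

noncomputable def abelSum (z : ι → R) (s : Finset ι) : R[X] :=
  ∑ I ∈ s.powerset with I.Nonempty,
    C (∑ i ∈ I, z i) ^ (#I - 1) * (X - C (∑ i ∈ I, z i)) ^ (#s - #I)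

theorem derivative_abelSum_eq_sum (z : ι → R) (s : Finset ι) :
    derivative (abelSum z s) = ∑ I ∈ s.powerset with I.Nonempty,
      (#s - #I) • (C (∑ i ∈ I, z i) ^ (#I - 1) * (X - C (∑ i ∈ I, z i)) ^ (#s - #I - 1)) := by
  simp only [abelSum, derivative_sum, derivative_mul, derivative_pow, derivative_sub,
    derivative_X, derivative_C, mul_zero, zero_mul, zero_add, sub_zero, mul_one, nsmul_eq_mul,
    ← C_eq_natCast]
  exact sum_congr rfl fun I _ ↦ by ring

theorem derivative_abelSum [DecidableEq ι] (z : ι → R) (s : Finset ι) :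
    derivative (abelSum z s) = ∑ a ∈ s, abelSum z (s.erase a) := by
  rw [derivative_abelSum_eq_sum, sum_powerset_filter_card_sub_smul]
  refine sum_congr rfl fun a ha ↦ sum_congr rfl fun I _ ↦ ?_
  rw [card_erase_of_mem ha, Nat.sub_right_comm]

theorem eval_zero_abelSum [IsAddTorsionFree R] [DecidableEq ι] (z : ι → R) {s : Finset ι}
    (hs : 2 ≤ #s) : (abelSum z s).eval 0 = 0 := by
  have hterm : ∀ I ∈ s.powerset.filter (·.Nonempty),
      (∑ i ∈ I, z i) ^ (#I - 1) * (0 - ∑ i ∈ I, z i) ^ (#s - #I)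
        = (-1) ^ (#s - #I) * (∑ i ∈ I, z i) ^ (#s - 1) := by
    intro I hI
    obtain ⟨hIs, hI0⟩ := mem_filter.1 hI
    have hIcard := card_le_card (mem_powerset.1 hIs)
    have hIpos := hI0.card_pos
    rw [zero_sub, neg_pow, mul_left_comm, ← pow_add]
    congr 2
    omega
  have hempty : ∀ I ∈ s.powerset, (-1) ^ (#s - #I) * (∑ i ∈ I, z i) ^ (#s - 1) ≠ 0 →
      I.Nonempty := by
    intro I _ hI
    by_contra h
    simp [not_nonempty_iff_eq_empty.1 h, zero_pow (by omega : #s - 1 ≠ 0)] at hI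
  have halt := congrArg (eval 0)
    (sum_powerset_neg_one_pow_card_sdiff_mul_X_add_C_pow_eq_zero z s (by omega : #s - 1 < #s))
  simp only [eval_finsetSum, eval_mul, eval_pow, eval_neg, eval_one, eval_add, eval_X, eval_C,
    zero_add, eval_zero] at halt
  simp only [abelSum, eval_finsetSum, eval_mul, eval_pow, eval_sub, eval_X, eval_C]
  rw [sum_congr rfl hterm, sum_filter_of_ne hempty, halt]

theorem abelSum_eq [IsAddTorsionFree R] [DecidableEq ι] (z : ι → R) (s : Finset ι) :
    abelSum z s = (#s : R[X]) * X ^ (#s - 1) := by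
  induction s using Finset.strongInduction with
  | H s ih =>
  rcases Nat.lt_or_ge #s 2 with hs | hs
  · obtain hs | hs : #s = 0 ∨ #s = 1 := by omega
    · rw [card_eq_zero.1 hs]
      simp [abelSum, filter_singleton]
    · obtain ⟨a, rfl⟩ := card_eq_one.1 hs
      rw [abelSum, sum_filter, ← LawfulSingleton.insert_empty_eq a,
        sum_powerset_insert (notMem_empty a)]
      simp
  refine eq_of_derivative_eq_of_eval_eq 0 ?_ ?_
  · rw [derivative_abelSum, sum_congr rfl fun a ha ↦ by
      rw [ih _ (erase_ssubset ha), card_erase_of_mem ha]]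
    rw [sum_const, nsmul_eq_mul, derivative_natCast_mul, derivative_X_pow, C_eq_natCast]
  · rw [eval_zero_abelSum z hs]
    simp [zero_pow (by omega : #s - 1 ≠ 0)]

end Polynomial

section

variable {R ι : Type*} [CommRing R] [IsAddTorsionFree R] [DecidableEq ι]

open Polynomial in
theorem sum_card_sub_smul_pow_mul_sub_pow (z : ι → R) (s : Finset ι) :
    ∑ I ∈ s.powerset with I.Nonempty, (#s - #I) •
        ((∑ i ∈ I, z i) ^ (#I - 1) * (∑ i ∈ s, z i - ∑ i ∈ I, z i) ^ (#s - #I - 1))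
      = (#s * (#s - 1)) • (∑ i ∈ s, z i) ^ (#s - 2) := by
  have h := congrArg (fun p ↦ (derivative p).eval (∑ i ∈ s, z i)) (abelSum_eq z s)
  simp only [derivative_abelSum_eq_sum, eval_finsetSum, eval_smul, eval_mul, eval_pow, eval_sub,
    eval_X, eval_C, derivative_natCast_mul, derivative_X_pow, eval_natCast] at h
  rw [h, ← Nat.sub_add_eq, mul_smul, nsmul_eq_mul, nsmul_eq_mul]

theorem sum_pow_mul_sub_pow (z : ι → R) (s : Finset ι) :
    ∑ I ∈ s.powerset with I ≠ ∅ ∧ I ≠ s,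
        (∑ i ∈ I, z i) ^ (#I - 1) * (∑ i ∈ s, z i - ∑ i ∈ I, z i) ^ (#s - #I - 1)
      = ((2 * (#s - 1) : ℕ) : R) * (∑ i ∈ s, z i) ^ (#s - 2) := by
  rcases s.eq_empty_or_nonempty with rfl | hs
  · simp [filter_singleton]
  set T : Finset ι → R := fun I ↦
    (∑ i ∈ I, z i) ^ (#I - 1) * (∑ i ∈ s, z i - ∑ i ∈ I, z i) ^ (#s - #I - 1)
  have hproper : ∑ I ∈ s.powerset with I ≠ ∅ ∧ I ≠ s, (#s - #I) • T I
      = (#s * (#s - 1)) • (∑ i ∈ s, z i) ^ (#s - 2) := by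
    rw [← sum_card_sub_smul_pow_mul_sub_pow]
    refine sum_subset (fun I ↦ by simp +contextual [nonempty_iff_ne_empty]) fun I hI hI' ↦ ?_
    obtain rfl : I = s := by simp_all [nonempty_iff_ne_empty]
    simp
  have hsymm : ∑ I ∈ s.powerset with I ≠ ∅ ∧ I ≠ s, #I • T I
      = ∑ I ∈ s.powerset with I ≠ ∅ ∧ I ≠ s, (#s - #I) • T I := by
    rw [← sum_powerset_filter_sdiff s ?_ (fun I ↦ #I • T I)]
    · refine sum_congr rfl fun I hI ↦ ?_
      have hIs := mem_powerset.1 (mem_filter.1 hI).1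
      simp only [T, card_sdiff_of_subset hIs, sum_sdiff_eq_sub hIs, sub_sub_cancel,
        Nat.sub_sub_self (card_le_card hIs), mul_comm]
    · intro I hI
      have hsI : s ⊆ I ↔ I = s := ⟨hI.antisymm, fun h ↦ h ▸ Subset.rfl⟩
      rw [Ne, Ne, sdiff_eq_empty_iff_subset, hsI, _root_.sdiff_eq_self_iff_disjoint,
        disjoint_of_subset_iff_left_eq_empty hI]
      exact and_comm
  have hcancel : #s • ∑ I ∈ s.powerset with I ≠ ∅ ∧ I ≠ s, T I
      = #s • ((2 * (#s - 1)) • (∑ i ∈ s, z i) ^ (#s - 2)) := by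
    calc #s • ∑ I ∈ s.powerset with I ≠ ∅ ∧ I ≠ s, T I
        = ∑ I ∈ s.powerset with I ≠ ∅ ∧ I ≠ s, (#I + (#s - #I)) • T I := by
          rw [smul_sum]
          refine sum_congr rfl fun I hI ↦ ?_
          rw [Nat.add_sub_cancel' (card_le_card (mem_powerset.1 (mem_filter.1 hI).1))]
      _ = 2 • ((#s * (#s - 1)) • (∑ i ∈ s, z i) ^ (#s - 2)) := by
          simp only [add_smul, sum_add_distrib, hsymm, hproper, two_smul]
      _ = #s • ((2 * (#s - 1)) • (∑ i ∈ s, z i) ^ (#s - 2)) := by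
          rw [smul_smul, smul_smul, mul_left_comm]
  rw [nsmul_right_injective (card_ne_zero.2 hs) hcancel, nsmul_eq_mul]

end

open Finset MvPolynomial

theorem lqpp_i_eq_one_general (n : ℕ) :
    ∑ I ∈ Finset.univ.powerset.filter (fun I : Finset (Fin n) => I ≠ ∅ ∧ I ≠ Finset.univ),
        (∑ j ∈ I, X j) ^ (I.card - 1) *
          ((∑ j, X j) - ∑ j ∈ I, X j) ^ (n - I.card - 1) =
      ((2 * (n - 1) : ℕ) : MvPolynomial (Fin n) ℚ) * (∑ j, X j) ^ (n - 2) := by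
  have h := sum_pow_mul_sub_pow (X : Fin n → MvPolynomial (Fin n) ℚ) univ
  rwa [card_univ, Fintype.card_fin] at h

/-- The `i = 1` case of equation (lqpp) of Getzler–Okounkov–Pandharipande: for `n ≥ 1`,
`∑_{∅ ≠ I ⊊ {1,…,n}} Z_I^{|I|-1} (Z-Z_I)^{n-|I|-1} = 2(n-1) Z^{n-2}`
as polynomials in `z_1, …, z_n` over `ℚ`. -/
theorem lqpp_i_eq_one (n : ℕ) (hn : 1 ≤ n) :
    ∑ I ∈ Finset.univ.powerset.filter (fun I : Finset (Fin n) => I ≠ ∅ ∧ I ≠ Finset.univ),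
        (∑ j ∈ I, X j) ^ (I.card - 1) *
          ((∑ j, X j) - ∑ j ∈ I, X j) ^ (n - I.card - 1) =
      ((2 * (n - 1) : ℕ) : MvPolynomial (Fin n) ℚ) * (∑ j, X j) ^ (n - 2) :=
  lqpp_i_eq_one_general n
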